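/- Let A be a 5-dimensional non-split nilpotent left Leibniz algebra over ℂ with dim A² = 3, dim A³ = 1, and dim Leib(A) = 1. Then dim Z(A) = 2. -/
import Mathlib


/-- The left Leibniz identity for a bilinear bracket:
`[a,[b,c]] = [[a,b],c] + [b,[a,c]]`. -/
def IsLeibnizBracket {K A : Type*} [CommRing K] [AddCommGroup A] [Module K A]
    (br : A →ₗ[K] A →ₗ[K] A) : Prop :=
  ∀ a b c : A, br a (br b c) = br (br a b) c + br b (br a c)

/-- The span of all brackets `[s,t]` with `s ∈ S`, `t ∈ T`. -/
def bracketSpan {K A : Type*} [CommRing K] [AddCommGroup A] [Module K A]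
    (br : A →ₗ[K] A →ₗ[K] A) (S T : Submodule K A) : Submodule K A :=
  Submodule.span K {x | ∃ s ∈ S, ∃ t ∈ T, br s t = x}

/-- Lower central series: `lcs br n = A^(n+1)`, i.e. `lcs br 0 = A¹ = A` and
`lcs br (n+1) = [A, lcs br n]`. -/
def lcs {K A : Type*} [CommRing K] [AddCommGroup A] [Module K A]
    (br : A →ₗ[K] A →ₗ[K] A) : ℕ → Submodule K A
  | 0 => ⊤
  | n + 1 => bracketSpan br ⊤ (lcs br n)

/-- `Leib(A)`: the span of all squares `[a,a]`. -/
def leibIdeal {K A : Type*} [CommRing K] [AddCommGroup A] [Module K A]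
    (br : A →ₗ[K] A →ₗ[K] A) : Submodule K A :=
  Submodule.span K {x | ∃ a : A, br a a = x}

/-- The center `Z(A) = {x : [a,x] = 0 = [x,a] for all a}`. -/
def leibnizCenter {K A : Type*} [CommRing K] [AddCommGroup A] [Module K A]
    (br : A →ₗ[K] A →ₗ[K] A) : Submodule K A where
  carrier := {x | ∀ a : A, br a x = 0 ∧ br x a = 0}
  add_mem' := by
    intro x y hx hy a
    constructor <;>
      simp [map_add, LinearMap.add_apply, (hx a).1, (hx a).2, (hy a).1, (hy a).2]
  zero_mem' := by
    intro a
    constructor <;> simp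
  smul_mem' := by
    intro c x hx a
    constructor <;>
      simp [map_smul, LinearMap.smul_apply, (hx a).1, (hx a).2]

/-- Two-sided ideal of a Leibniz algebra. -/
def IsLeibnizIdeal {K A : Type*} [CommRing K] [AddCommGroup A] [Module K A]
    (br : A →ₗ[K] A →ₗ[K] A) (I : Submodule K A) : Prop :=
  ∀ a : A, ∀ x ∈ I, br a x ∈ I ∧ br x a ∈ I

section helpers
variable {A : Type*} [AddCommGroup A] [Module ℂ A] (br : A →ₗ[ℂ] A →ₗ[ℂ] A)

lemma mem_bracketSpan' {S T : Submodule ℂ A} {s t : A} (hs : s ∈ S) (ht : t ∈ T) :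
    br s t ∈ bracketSpan br S T :=
  Submodule.subset_span ⟨s, hs, t, ht, rfl⟩

lemma bracketSpan_le' {S T P : Submodule ℂ A} (h : ∀ s ∈ S, ∀ t ∈ T, br s t ∈ P) :
    bracketSpan br S T ≤ P := by
  apply Submodule.span_le.2
  rintro x ⟨s, hs, t, ht, rfl⟩
  exact h s hs t ht

lemma bracketSpan_mono_right' {S T T' : Submodule ℂ A} (h : T ≤ T') :
    bracketSpan br S T ≤ bracketSpan br S T' :=
  Submodule.span_mono (by rintro x ⟨s, hs, t, ht, rfl⟩; exact ⟨s, hs, t, h ht, rfl⟩)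

lemma lcs_succ_le' (n : ℕ) : lcs br (n + 1) ≤ lcs br n := by
  induction n with
  | zero => exact le_top
  | succ n ih => exact bracketSpan_mono_right' br ih

lemma lcs_one_def : lcs br 1 = bracketSpan br ⊤ ⊤ := rfl

lemma mem_lcs_one (a b : A) : br a b ∈ lcs br 1 :=
  mem_bracketSpan' br trivial trivial

lemma leibIdeal_le_lcs_one : leibIdeal br ≤ lcs br 1 := by
  apply Submodule.span_le.2
  rintro x ⟨a, rfl⟩
  exact mem_lcs_one br a a

variable {br} (hbr : IsLeibnizBracket br)
include hbr

-- [[a,b],c] + [[b,a],c] = 0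
lemma rightkill (a b c : A) : br (br a b) c + br (br b a) c = 0 := by
  have h1 := hbr a b c
  have h2 := hbr b a c
  have h1' : br (br a b) c = br a (br b c) - br b (br a c) := by rw [h1]; abel
  have h2' : br (br b a) c = br b (br a c) - br a (br b c) := by rw [h2]; abel
  rw [h1', h2']; abel

-- symmetrized brackets lie in Leib
omit hbr in
lemma pol (a b : A) : br a b + br b a ∈ leibIdeal br := by
  have hsq : ∀ x : A, br x x ∈ leibIdeal br := fun x => Submodule.subset_span ⟨x, rfl⟩
  have : br a b + br b a = br (a + b) (a + b) - br a a - br b b := by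
    simp [map_add, LinearMap.add_apply]; abel
  rw [this]
  exact Submodule.sub_mem _ (Submodule.sub_mem _ (hsq _) (hsq _)) (hsq _)

-- [Leib, c] = 0
lemma leib_rbr_zero {x : A} (hx : x ∈ leibIdeal br) (c : A) : br x c = 0 := by
  have : leibIdeal br ≤ LinearMap.ker (br.flip c) := by
    apply Submodule.span_le.2
    rintro y ⟨a, rfl⟩
    have h := rightkill hbr a a c
    have h2 : (2 : ℂ) • br (br a a) c = 0 := by rw [two_smul]; exact h
    have := smul_eq_zero.1 h2
    simp only [SetLike.mem_coe, LinearMap.mem_ker, LinearMap.flip_apply]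
    rcases this with h | h
    · norm_num at h
    · exact h
  exact this hx

-- [a, Leib] ⊆ Leib
lemma leib_lbr_mem {x : A} (hx : x ∈ leibIdeal br) (a : A) : br a x ∈ leibIdeal br := by
  have : leibIdeal br ≤ Submodule.comap (br a) (leibIdeal br) := by
    apply Submodule.span_le.2
    rintro y ⟨b, rfl⟩
    simp only [SetLike.mem_coe, Submodule.mem_comap]
    rw [hbr a b b]
    exact pol (br a b) b
  exact this hx

end helpers

section helpers2
variable {A : Type*} [AddCommGroup A] [Module ℂ A] {br : A →ₗ[ℂ] A →ₗ[ℂ] A}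
  (hbr : IsLeibnizBracket br)
include hbr

-- [A², c] ⊆ A³
lemma lcs1_rbr_mem {x : A} (hx : x ∈ lcs br 1) (c : A) : br x c ∈ lcs br 2 := by
  have : lcs br 1 ≤ Submodule.comap (br.flip c) (lcs br 2) := by
    apply bracketSpan_le'
    rintro a - b -
    simp only [Submodule.mem_comap, LinearMap.flip_apply]
    have h : br (br a b) c = br a (br b c) - br b (br a c) := by rw [hbr a b c]; abel
    rw [h]
    exact Submodule.sub_mem _ (mem_bracketSpan' br trivial (mem_lcs_one br b c))
      (mem_bracketSpan' br trivial (mem_lcs_one br a c))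
  exact this hx

variable (h3 : lcs br 3 = ⊥)
include h3

-- [A, A³] = 0
omit hbr in
lemma lbr_lcs2_zero (a : A) {x : A} (hx : x ∈ lcs br 2) : br a x = 0 := by
  have : br a x ∈ lcs br 3 := mem_bracketSpan' br trivial hx
  rw [h3] at this
  exact this

-- [A², A²] = 0
lemma lcs1_lcs1_zero {x y : A} (hx : x ∈ lcs br 1) (hy : y ∈ lcs br 1) : br x y = 0 := by
  have : lcs br 1 ≤ LinearMap.ker (br.flip y) := by
    apply bracketSpan_le'
    rintro a - b -
    simp only [LinearMap.mem_ker, LinearMap.flip_apply]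
    have h1 : br a (br b y) = 0 := lbr_lcs2_zero h3 a (mem_bracketSpan' br trivial hy)
    have h2 : br b (br a y) = 0 := lbr_lcs2_zero h3 b (mem_bracketSpan' br trivial hy)
    have := hbr a b y
    rw [h1, h2] at this
    rw [add_zero] at this
    exact this.symm
  exact this hx

-- [A³, a] = 0
lemma lcs2_rbr_zero {x : A} (hx : x ∈ lcs br 2) (a : A) : br x a = 0 := by
  have : lcs br 2 ≤ LinearMap.ker (br.flip a) := by
    apply bracketSpan_le'
    rintro p - w hw
    simp only [LinearMap.mem_ker, LinearMap.flip_apply]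
    have h1 : br p (br w a) = 0 :=
      lbr_lcs2_zero h3 p (lcs1_rbr_mem hbr hw a)
    have h2 : br w (br p a) = 0 := lcs1_lcs1_zero hbr h3 hw (mem_lcs_one br p a)
    have := hbr p w a
    rw [h1, h2] at this
    rw [add_zero] at this
    exact this.symm
  exact this hx

end helpers2

open Module

/-- If `A` is a 5-dimensional non-split nilpotent left Leibniz algebra over
`ℂ` with `dim A² = 3`, `dim A³ = 1` and `dim Leib(A) = 1`, then
`dim Z(A) = 2`. -/
theorem dim_center_eq_two
    {A : Type*} [AddCommGroup A] [Module ℂ A] [FiniteDimensional ℂ A]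
    (br : A →ₗ[ℂ] A →ₗ[ℂ] A) (hbr : IsLeibnizBracket br)
    (hns : ¬ ∃ I J : Submodule ℂ A, IsLeibnizIdeal br I ∧ IsLeibnizIdeal br J ∧
      I ≠ ⊥ ∧ J ≠ ⊥ ∧ IsCompl I J)
    (hnil : ∃ m : ℕ, lcs br m = ⊥)
    (hdim : Module.finrank ℂ A = 5)
    (hA2 : Module.finrank ℂ ↥(lcs br 1) = 3)
    (hA3 : Module.finrank ℂ ↥(lcs br 2) = 1)
    (hleib : Module.finrank ℂ ↥(leibIdeal br) = 1) :
    Module.finrank ℂ ↥(leibnizCenter br) = 2 := by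
  -- basic non-bot facts
  have hlcs2_ne : lcs br 2 ≠ ⊥ := by
    intro h
    rw [h, finrank_bot] at hA3
    exact absurd hA3 (by norm_num)
  have hlcs1_ne : lcs br 1 ≠ ⊥ := by
    intro h
    rw [h, finrank_bot] at hA2
    exact absurd hA2 (by norm_num)
  -- Step A : A⁴ = 0
  have hstab : lcs br 3 = lcs br 2 → ∀ m, lcs br (m + 2) = lcs br 2 := by
    intro h m
    induction m with
    | zero => rfl
    | succ n ih =>
        show bracketSpan br ⊤ (lcs br (n + 2)) = lcs br 2
        rw [ih]
        exact h
  have h3 : lcs br 3 = ⊥ := by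
    by_contra h
    have heq : lcs br 3 = lcs br 2 := by
      apply Submodule.eq_of_le_of_finrank_le (lcs_succ_le' br 2)
      have h0 : Module.finrank ℂ ↥(lcs br 3) ≠ 0 := fun h0 => h (Submodule.finrank_eq_zero.1 h0)
      rw [hA3]
      exact Nat.one_le_iff_ne_zero.2 h0
    obtain ⟨m, hm⟩ := hnil
    match m with
    | 0 =>
        have : Module.finrank ℂ (⊤ : Submodule ℂ A) = 0 := by
          rw [show (⊤ : Submodule ℂ A) = lcs br 0 from rfl, hm, finrank_bot]
        rw [finrank_top] at this
        omega
    | 1 => rw [hm, finrank_bot] at hA2; omega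
    | (n + 2) => exact hlcs2_ne ((hstab heq n).symm.trans hm)
  -- Step B : A³ ⊆ Z and Leib right-central
  have hlcs2Z : lcs br 2 ≤ leibnizCenter br := by
    intro z hz a
    exact ⟨lbr_lcs2_zero h3 a hz, lcs2_rbr_zero hbr h3 hz a⟩
  -- Step C : Z ⊆ A² (non-splitness)
  have hZle : leibnizCenter br ≤ lcs br 1 := by
    by_contra hc
    obtain ⟨x, hxZ, hxn⟩ := SetLike.not_le_iff_exists.1 hc
    obtain ⟨L, hL⟩ := Submodule.exists_isCompl (ℂ ∙ ((lcs br 1).mkQ x))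
    set J := Submodule.comap (lcs br 1).mkQ L with hJ
    have hlcs1J : lcs br 1 ≤ J := by
      intro w hw
      simp only [hJ, Submodule.mem_comap, Submodule.mkQ_apply]
      rw [(Submodule.Quotient.mk_eq_zero _).2 hw]
      exact L.zero_mem
    have hxne : (lcs br 1).mkQ x ≠ 0 := by
      intro h0
      rw [Submodule.mkQ_apply, Submodule.Quotient.mk_eq_zero] at h0
      exact hxn h0
    apply hns
    refine ⟨ℂ ∙ x, J, ?_, ?_, ?_, ?_, ?_⟩
    · intro a y hy
      obtain ⟨c, rfl⟩ := Submodule.mem_span_singleton.1 hy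
      constructor
      · rw [map_smul, (hxZ a).1, smul_zero]; exact Submodule.zero_mem _
      · rw [map_smul, LinearMap.smul_apply, (hxZ a).2, smul_zero]; exact Submodule.zero_mem _
    · intro a y hy
      exact ⟨hlcs1J (mem_lcs_one br a y), hlcs1J (mem_lcs_one br y a)⟩
    · rw [Ne, Submodule.span_singleton_eq_bot]
      intro h0
      rw [h0] at hxn
      exact hxn ((lcs br 1).zero_mem)
    · intro h0
      rw [h0] at hlcs1J
      exact hlcs1_ne (le_bot_iff.1 hlcs1J)
    · constructor
      · rw [disjoint_iff]
        rw [eq_bot_iff]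
        intro y hy
        obtain ⟨hy1, hy2⟩ := Submodule.mem_inf.1 hy
        obtain ⟨c, rfl⟩ := Submodule.mem_span_singleton.1 hy1
        have hmL : (lcs br 1).mkQ (c • x) ∈ L := hy2
        have hmS : (lcs br 1).mkQ (c • x) ∈ ℂ ∙ ((lcs br 1).mkQ x) := by
          rw [map_smul]
          exact Submodule.smul_mem _ c (Submodule.mem_span_singleton_self _)
        have : (lcs br 1).mkQ (c • x) = 0 := by
          have := hL.disjoint
          rw [disjoint_iff, eq_bot_iff] at this
          simpa using this (Submodule.mem_inf.2 ⟨hmS, hmL⟩)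
        rw [map_smul, smul_eq_zero] at this
        rcases this with h0 | h0
        · simp [h0]
        · exact absurd h0 hxne
      · rw [codisjoint_iff, eq_top_iff]
        intro a _
        have : (lcs br 1).mkQ a ∈ (ℂ ∙ ((lcs br 1).mkQ x)) ⊔ L := by
          rw [hL.sup_eq_top]; trivial
        obtain ⟨u, hu, v, hv, huv⟩ := Submodule.mem_sup.1 this
        obtain ⟨c, rfl⟩ := Submodule.mem_span_singleton.1 hu
        refine Submodule.mem_sup.2 ⟨c • x, Submodule.smul_mem _ c (Submodule.mem_span_singleton_self _), a - c • x, ?_, by abel⟩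
        simp only [hJ, Submodule.mem_comap]
        have : (lcs br 1).mkQ (a - c • x) = v := by
          rw [map_sub, map_smul, ← huv]; abel
        rw [this]
        exact hv
  -- Step D : Z ≠ A²
  have hZne : leibnizCenter br ≠ lcs br 1 := by
    intro h
    have hb : lcs br 2 ≤ ⊥ := by
      apply bracketSpan_le'
      rintro a - x hx
      rw [← h] at hx
      simp [Submodule.mem_bot, (hx a).1]
    exact hlcs2_ne (le_bot_iff.1 hb)
  -- Step E : case split on Leib ∩ A³
  by_cases hcap : leibIdeal br ⊓ lcs br 2 = ⊥
  · -- Leib is central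
    have hleibZ : leibIdeal br ≤ leibnizCenter br := by
      intro x hx a
      refine ⟨?_, leib_rbr_zero hbr hx a⟩
      have h1 : br a x ∈ leibIdeal br := leib_lbr_mem hbr hx a
      have h2 : br a x ∈ lcs br 2 := mem_bracketSpan' br trivial (leibIdeal_le_lcs_one br hx)
      have h12 : br a x ∈ leibIdeal br ⊓ lcs br 2 := Submodule.mem_inf.2 ⟨h1, h2⟩
      rw [hcap] at h12
      simpa using h12
    have hsup : leibIdeal br ⊔ lcs br 2 ≤ leibnizCenter br := sup_le hleibZ hlcs2Z
    have hfr : Module.finrank ℂ ↥(leibIdeal br ⊔ lcs br 2) = 2 := by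
      have hh := Submodule.finrank_sup_add_finrank_inf_eq (leibIdeal br) (lcs br 2)
      rw [hcap, finrank_bot, hleib, hA3] at hh
      omega
    have h2le : 2 ≤ Module.finrank ℂ ↥(leibnizCenter br) := by
      rw [← hfr]
      exact Submodule.finrank_mono hsup
    have hlt : Module.finrank ℂ ↥(leibnizCenter br) < 3 := by
      rw [← hA2]
      exact Submodule.finrank_lt_finrank_of_lt (lt_of_le_of_ne hZle hZne)
    omega
  · -- Leib = A³, contradiction with dim A² = 3
    exfalso
    have hEq : leibIdeal br = lcs br 2 := by
      have hfr1 : Module.finrank ℂ ↥(leibIdeal br ⊓ lcs br 2) ≠ 0 :=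
        fun h0 => hcap (Submodule.finrank_eq_zero.1 h0)
      have e1 : leibIdeal br ⊓ lcs br 2 = leibIdeal br := by
        apply Submodule.eq_of_le_of_finrank_le inf_le_left
        omega
      have e2 : leibIdeal br ⊓ lcs br 2 = lcs br 2 := by
        apply Submodule.eq_of_le_of_finrank_le inf_le_right
        omega
      rw [← e1, e2]
    have hfrV : Module.finrank ℂ (A ⧸ lcs br 1) = 2 := by
      have hh := Submodule.finrank_quotient_add_finrank (lcs br 1)
      rw [hdim, hA2] at hh
      omega
    let b : Basis (Fin 2) ℂ (A ⧸ lcs br 1) := Module.finBasisOfFinrankEq ℂ _ hfrV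
    obtain ⟨e0, he0⟩ := Submodule.mkQ_surjective (lcs br 1) (b 0)
    obtain ⟨e1, he1⟩ := Submodule.mkQ_surjective (lcs br 1) (b 1)
    have hdecomp : ∀ s : A, ∃ c0 c1 : ℂ, s - (c0 • e0 + c1 • e1) ∈ lcs br 1 := by
      intro s
      refine ⟨b.repr ((lcs br 1).mkQ s) 0, b.repr ((lcs br 1).mkQ s) 1, ?_⟩
      have hs : (lcs br 1).mkQ s
          = b.repr ((lcs br 1).mkQ s) 0 • b 0 + b.repr ((lcs br 1).mkQ s) 1 • b 1 := by
        have hh := b.sum_repr ((lcs br 1).mkQ s)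
        rw [Fin.sum_univ_two] at hh
        exact hh.symm
      have h0 : (lcs br 1).mkQ (s - (b.repr ((lcs br 1).mkQ s) 0 • e0
          + b.repr ((lcs br 1).mkQ s) 1 • e1)) = 0 := by
        rw [map_sub, map_add, map_smul, map_smul, he0, he1, ← hs, sub_self]
      rwa [Submodule.mkQ_apply, Submodule.Quotient.mk_eq_zero] at h0
    set g := br e0 e1 with hg
    set M := lcs br 2 ⊔ (ℂ ∙ g) with hM
    have hM2 : lcs br 2 ≤ M := le_sup_left
    have h01 : br e0 e1 ∈ M := Submodule.mem_sup_right (Submodule.mem_span_singleton_self g)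
    have hsq : ∀ x : A, br x x ∈ M := fun x => hM2 (hEq ▸ Submodule.subset_span ⟨x, rfl⟩)
    have h10 : br e1 e0 ∈ M := by
      have hp : br e0 e1 + br e1 e0 ∈ lcs br 2 := hEq ▸ pol e0 e1
      have hx : br e1 e0 = (br e0 e1 + br e1 e0) - br e0 e1 := by abel
      rw [hx]
      exact M.sub_mem (hM2 hp) h01
    have hall : lcs br 1 ≤ M := by
      rw [lcs_one_def]
      apply bracketSpan_le'
      rintro s - t -
      obtain ⟨c0, c1, hu⟩ := hdecomp s
      obtain ⟨d0, d1, hv⟩ := hdecomp t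
      have hsplit : br s t = br (c0 • e0 + c1 • e1) (d0 • e0 + d1 • e1)
          + br (s - (c0 • e0 + c1 • e1)) (d0 • e0 + d1 • e1)
          + br s (t - (d0 • e0 + d1 • e1)) := by
        simp only [map_sub, map_add, LinearMap.sub_apply, LinearMap.add_apply]
        abel
      rw [hsplit]
      refine M.add_mem (M.add_mem ?_ ?_) ?_
      · simp only [map_add, map_smul, LinearMap.add_apply, LinearMap.smul_apply]
        refine M.add_mem (M.smul_mem _ ?_) (M.smul_mem _ ?_)
        · exact M.add_mem (M.smul_mem _ (hsq e0)) (M.smul_mem _ h10)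
        · exact M.add_mem (M.smul_mem _ h01) (M.smul_mem _ (hsq e1))
      · exact hM2 (lcs1_rbr_mem hbr hu _)
      · exact hM2 (mem_bracketSpan' br trivial hv)
    have hm1 : Module.finrank ℂ ↥(lcs br 1) ≤ Module.finrank ℂ ↥M := Submodule.finrank_mono hall
    have hm2 : Module.finrank ℂ ↥M ≤ 2 := by
      have hh := Submodule.finrank_sup_add_finrank_inf_eq (lcs br 2) (ℂ ∙ g)
      rw [← hM] at hh
      have hgle : Module.finrank ℂ ↥(ℂ ∙ g) ≤ 1 := by
        by_cases hg0 : g = 0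
        · rw [hg0, Submodule.span_zero_singleton, finrank_bot]; omega
        · rw [finrank_span_singleton hg0]
      rw [hA3] at hh
      omega
    rw [hA2] at hm1
    omega
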